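/- arXiv:2109.13164 — 2 statements merged into one kernel-verified Lean document; each statement's English description precedes it below -/
import Mathlib

section
/- Let X be a real d_r × d_c matrix, and let J_r (d_r × k_r) and J_c (d_c × k_c) have orthonormal columns. Set A* = J_rᵀ X J_c. Then for every real k_r × k_c matrix A, ‖X − J_r A J_cᵀ‖_F² = ‖X − J_r A* J_cᵀ‖_F² + ‖A* − A‖_F². -/
open Matrix BigOperators

/-- Squared Frobenius norm of a real matrix: `∑ i, ∑ j, (X i j)^2`. -/
noncomputable def frobSq {m n : ℕ} (X : Matrix (Fin m) (Fin n) ℝ) : ℝ :=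
  ∑ i, ∑ j, (X i j) ^ 2

/-!
Write `X - J_r A J_cᵀ = R + J_r (A* - A) J_cᵀ` with residual `R = X - J_r A* J_cᵀ`. The map
`D ↦ J_r D J_cᵀ` is a Frobenius isometry whose adjoint is `M ↦ J_rᵀ M J_c`, and that adjoint
kills `R`; so the two summands are Frobenius-orthogonal and Pythagoras applies.
-/

namespace Matrix

variable {R : Type*} [CommRing R] {m n k l : Type*}

theorem trace_transpose_mul_sandwich [Fintype m] [Fintype n] [Fintype k] [Fintype l]
    (E : Matrix m n R) (P : Matrix m k R) (D : Matrix k l R) (Q : Matrix n l R) :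
    (Eᵀ * (P * D * Qᵀ)).trace = ((Pᵀ * E * Q)ᵀ * D).trace := by
  rw [show Eᵀ * (P * D * Qᵀ) = Eᵀ * P * D * Qᵀ by simp only [Matrix.mul_assoc],
    trace_mul_comm]
  simp only [transpose_mul, transpose_transpose, Matrix.mul_assoc]

theorem transpose_mul_sandwich_of_orthonormal [Fintype m] [Fintype k] [Fintype l]
    [DecidableEq k] {P : Matrix m k R} {Q : Matrix n l R}
    (hP : Pᵀ * P = 1) (D : Matrix k l R) :
    (P * D * Qᵀ)ᵀ * (P * D * Qᵀ) = Q * (Dᵀ * D) * Qᵀ := by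
  simp only [transpose_mul, transpose_transpose, Matrix.mul_assoc]
  rw [← Matrix.mul_assoc Pᵀ P, hP, Matrix.one_mul]

theorem transpose_mul_sub_sandwich_mul_eq_zero [Fintype m] [Fintype n] [Fintype k] [Fintype l]
    [DecidableEq k] [DecidableEq l] {P : Matrix m k R} {Q : Matrix n l R}
    (hP : Pᵀ * P = 1) (hQ : Qᵀ * Q = 1) (X : Matrix m n R) :
    Pᵀ * (X - P * (Pᵀ * X * Q) * Qᵀ) * Q = 0 := by
  rw [Matrix.mul_sub, Matrix.sub_mul, sub_eq_zero]
  calc Pᵀ * X * Q = (Pᵀ * P) * (Pᵀ * X * Q) * (Qᵀ * Q) := by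
        rw [hP, hQ, Matrix.one_mul, Matrix.mul_one]
    _ = Pᵀ * (P * (Pᵀ * X * Q) * Qᵀ) * Q := by simp only [Matrix.mul_assoc]

end Matrix

theorem frobSq_eq_trace {m n : ℕ} (X : Matrix (Fin m) (Fin n) ℝ) :
    frobSq X = (Xᵀ * X).trace := by
  simp only [frobSq, trace, diag, mul_apply, transpose_apply, sq]
  exact Finset.sum_comm

theorem frobSq_add_of_trace_eq_zero {m n : ℕ} {E F : Matrix (Fin m) (Fin n) ℝ}
    (h : (Eᵀ * F).trace = 0) : frobSq (E + F) = frobSq E + frobSq F := by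
  have h' : (Fᵀ * E).trace = 0 := by
    rw [← trace_transpose, transpose_mul, transpose_transpose, h]
  simp only [frobSq_eq_trace, transpose_add, Matrix.add_mul, Matrix.mul_add, trace_add, h,
    h']
  ring

theorem frobSq_sandwich_of_orthonormal {m n k l : ℕ} {P : Matrix (Fin m) (Fin k) ℝ}
    {Q : Matrix (Fin n) (Fin l) ℝ} (hP : Pᵀ * P = 1) (hQ : Qᵀ * Q = 1)
    (D : Matrix (Fin k) (Fin l) ℝ) : frobSq (P * D * Qᵀ) = frobSq D := by
  rw [frobSq_eq_trace, frobSq_eq_trace, transpose_mul_sandwich_of_orthonormal hP,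
    trace_mul_comm, ← Matrix.mul_assoc, hQ, Matrix.one_mul]

/-- Pythagorean identity for the tri-factorization objective: with `A* = J_rᵀ X J_c`,
`‖X − J_r A J_cᵀ‖_F² = ‖X − J_r A* J_cᵀ‖_F² + ‖A* − A‖_F²` for every `A`. -/
theorem frobSq_triFactor_pythagoras {dr dc kr kc : ℕ}
    (X : Matrix (Fin dr) (Fin dc) ℝ)
    (Jr : Matrix (Fin dr) (Fin kr) ℝ) (Jc : Matrix (Fin dc) (Fin kc) ℝ)
    (hJr : Jrᵀ * Jr = 1) (hJc : Jcᵀ * Jc = 1)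
    (Astar : Matrix (Fin kr) (Fin kc) ℝ) (hAstar : Astar = Jrᵀ * X * Jc)
    (A : Matrix (Fin kr) (Fin kc) ℝ) :
    frobSq (X - Jr * A * Jcᵀ) = frobSq (X - Jr * Astar * Jcᵀ) + frobSq (Astar - A) := by
  have hsplit : X - Jr * A * Jcᵀ = (X - Jr * Astar * Jcᵀ) + Jr * (Astar - A) * Jcᵀ := by
    simp only [Matrix.mul_sub, Matrix.sub_mul]
    abel
  have horth : ((X - Jr * Astar * Jcᵀ)ᵀ * (Jr * (Astar - A) * Jcᵀ)).trace = 0 := by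
    rw [trace_transpose_mul_sandwich, hAstar, transpose_mul_sub_sandwich_mul_eq_zero hJr hJc,
      transpose_zero, Matrix.zero_mul, trace_zero]
  rw [hsplit, frobSq_add_of_trace_eq_zero horth, frobSq_sandwich_of_orthonormal hJr hJc]
end

section
/- Let M be a real symmetric n × n matrix with eigenvalues λ_1 ≥ λ_2 ≥ … ≥ λ_n, and let k ≤ n. Then for every real n × k matrix C with Cᵀ C = I_k, trace(Cᵀ M C) ≤ λ_1 + λ_2 + … + λ_k. -/
open Matrix BigOperators

lemma kyfan_aux {n : ℕ} (lam : Fin n → ℝ)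
    (hdec : ∀ i j : Fin n, i ≤ j → lam j ≤ lam i)
    (k : ℕ) (hk : k ≤ n) (t : Fin n → ℝ)
    (h0 : ∀ i, 0 ≤ t i) (h1 : ∀ i, t i ≤ 1)
    (hsum : ∑ i, t i = (k : ℝ)) :
    ∑ i, lam i * t i ≤ ∑ i : Fin k, lam (Fin.castLE hk i) := by
  rcases lt_or_eq_of_le hk with hkn | hkn
  · -- k < n
    set c := lam ⟨k, hkn⟩ with hc
    have key : ∀ i : Fin n, lam i * t i ≤ c * t i + (if (i : ℕ) < k then lam i - c else 0) := by
      intro i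
      by_cases h : (i : ℕ) < k
      · have hlc : c ≤ lam i := hdec i ⟨k, hkn⟩ (by simp [Fin.le_def]; omega)
        have : (lam i - c) * (t i - 1) ≤ 0 :=
          mul_nonpos_of_nonneg_of_nonpos (by linarith) (by linarith [h1 i])
        simp only [h, if_true]; nlinarith
      · have hlc : lam i ≤ c := hdec ⟨k, hkn⟩ i (by simp [Fin.le_def]; omega)
        have : (lam i - c) * t i ≤ 0 :=
          mul_nonpos_of_nonpos_of_nonneg (by linarith) (h0 i)
        simp only [h, if_false]; nlinarith
    set F : ℕ → ℝ := fun i => if h : i < n then lam ⟨i, h⟩ - c else 0 with hF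
    have hsum_ite : ∑ i : Fin n, (if (i : ℕ) < k then lam i - c else 0)
        = ∑ i : Fin k, (lam (Fin.castLE hk i) - c) := by
      have e1 : ∑ i : Fin n, (if (i : ℕ) < k then lam i - c else 0)
          = ∑ i ∈ Finset.range n, (if i < k then F i else 0) := by
        rw [← Fin.sum_univ_eq_sum_range (fun i => if i < k then F i else 0) n]
        apply Finset.sum_congr rfl
        intro i _
        by_cases h : (i : ℕ) < k <;> simp [h, hF, i.isLt]
      have e2 : ∑ i ∈ Finset.range n, (if i < k then F i else 0)
          = ∑ i ∈ Finset.range k, (if i < k then F i else 0) :=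
        (Finset.sum_subset (Finset.range_subset_range.2 hk) (by
          intro x _ hx
          simp only [Finset.mem_range] at hx
          simp [hx])).symm
      have e3 : ∑ i ∈ Finset.range k, (if i < k then F i else 0)
          = ∑ i ∈ Finset.range k, F i := by
        apply Finset.sum_congr rfl
        intro i hi
        simp only [Finset.mem_range] at hi
        simp [hi]
      have e4 : ∑ i : Fin k, (lam (Fin.castLE hk i) - c) = ∑ i ∈ Finset.range k, F i := by
        rw [← Fin.sum_univ_eq_sum_range F k]
        apply Finset.sum_congr rfl
        intro i _
        simp [hF, lt_of_lt_of_le i.isLt hk]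
        rfl
      rw [e1, e2, e3, e4]
    calc ∑ i, lam i * t i ≤ ∑ i : Fin n, (c * t i + (if (i : ℕ) < k then lam i - c else 0)) :=
          Finset.sum_le_sum fun i _ => key i
      _ = c * (k : ℝ) + ∑ i : Fin n, (if (i : ℕ) < k then lam i - c else 0) := by
          rw [Finset.sum_add_distrib, ← Finset.mul_sum, hsum]
      _ = ∑ i : Fin k, lam (Fin.castLE hk i) := by
          rw [hsum_ite, Finset.sum_sub_distrib]
          simp [Finset.card_univ, mul_comm]
  · -- k = n : all t i = 1
    subst hkn
    have hall : ∀ i, t i = 1 := by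
      intro i
      by_contra h
      have hlt : t i < 1 := lt_of_le_of_ne (h1 i) h
      have h2 : ∑ j, t j < ∑ j : Fin k, (1 : ℝ) :=
        Finset.sum_lt_sum (fun j _ => h1 j) ⟨i, Finset.mem_univ i, hlt⟩
      rw [hsum] at h2
      simp at h2
    have hce : ∀ i : Fin k, Fin.castLE hk i = i := fun i => rfl
    simp only [hce]
    apply le_of_eq
    exact Finset.sum_congr rfl fun i _ => by rw [hall i, mul_one]

open Matrix BigOperators

/-- Ky Fan upper bound: if `M` is real symmetric with eigenvalues `λ_1 ≥ … ≥ λ_n` (counted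
with multiplicity) and `C` is an `n × k` matrix with orthonormal columns (`k ≤ n`), then
`trace(Cᵀ M C) ≤ λ_1 + … + λ_k`. -/
theorem ky_fan_trace_upper_bound {n : ℕ}
    (M : Matrix (Fin n) (Fin n) ℝ) (hM : M.IsHermitian)
    (lam : Fin n → ℝ)
    (hperm : ∃ σ : Equiv.Perm (Fin n), lam = hM.eigenvalues ∘ σ)
    (hdec : ∀ i j : Fin n, i ≤ j → lam j ≤ lam i)
    (k : ℕ) (hk : k ≤ n)
    (C : Matrix (Fin n) (Fin k) ℝ) (hC : Cᵀ * C = 1) :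
    Matrix.trace (Cᵀ * M * C) ≤ ∑ i : Fin k, lam (Fin.castLE hk i) := by
  obtain ⟨σ, hσ⟩ := hperm
  set μ := hM.eigenvalues with hμ
  set U : Matrix (Fin n) (Fin n) ℝ := (hM.eigenvectorUnitary : Matrix (Fin n) (Fin n) ℝ) with hUdef
  have hstar : star U = Uᵀ := by
    ext i j
    simp [Matrix.star_apply]
  have hUU : U * Uᵀ = 1 := by
    rw [← hstar]
    exact (Matrix.mem_unitaryGroup_iff).mp hM.eigenvectorUnitary.2
  have hspec : M = U * diagonal μ * Uᵀ := by
    have h := hM.spectral_theorem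
    rw [Unitary.conjStarAlgAut_apply, ← hUdef, hstar] at h
    have hd : (RCLike.ofReal ∘ μ : Fin n → ℝ) = μ := by
      funext i; simp
    rw [hd] at h
    exact h
  set P : Matrix (Fin n) (Fin k) ℝ := Uᵀ * C with hPdef
  have hPt : Pᵀ = Cᵀ * U := by
    rw [hPdef, Matrix.transpose_mul, Matrix.transpose_transpose]
  have hPtP : Pᵀ * P = 1 := by
    rw [hPt, hPdef, Matrix.mul_assoc, ← Matrix.mul_assoc U, hUU, Matrix.one_mul, hC]
  set s : Fin n → ℝ := fun i => ∑ j, (P i j) ^ 2 with hs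
  have htr : Matrix.trace (Cᵀ * M * C) = ∑ i, μ i * s i := by
    rw [hspec]
    have e : Cᵀ * (U * diagonal μ * Uᵀ) * C = Pᵀ * diagonal μ * P := by
      rw [hPt, hPdef]; simp only [Matrix.mul_assoc]
    rw [e, Matrix.trace, Matrix.mul_assoc]
    simp only [Matrix.diag, Matrix.mul_apply, Matrix.transpose_apply, Matrix.diagonal_mul]
    rw [Finset.sum_comm]
    apply Finset.sum_congr rfl
    intro i _
    rw [hs, Finset.mul_sum]
    apply Finset.sum_congr rfl
    intro j _
    have hd : ∑ x, diagonal μ i x * P x j = μ i * P i j := by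
      simp [Matrix.diagonal_apply, ite_mul]
    rw [hd]; ring
  set Q : Matrix (Fin n) (Fin n) ℝ := P * Pᵀ with hQdef
  have hQQ : Q * Q = Q := by
    rw [hQdef, Matrix.mul_assoc, ← Matrix.mul_assoc (Pᵀ), hPtP, Matrix.one_mul]
  have hQsym : ∀ i j, Q j i = Q i j := by
    intro i j
    simp [hQdef, Matrix.mul_apply, Matrix.transpose_apply, mul_comm]
  have hsQ : ∀ i, s i = Q i i := by
    intro i
    simp [hs, hQdef, Matrix.mul_apply, Matrix.transpose_apply, sq]
  have h0 : ∀ i, 0 ≤ s i := fun i => Finset.sum_nonneg fun j _ => sq_nonneg _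
  have h1 : ∀ i, s i ≤ 1 := by
    intro i
    have hq : Q i i = ∑ j, (Q i j) ^ 2 := by
      conv_lhs => rw [← hQQ]
      simp only [Matrix.mul_apply]
      exact Finset.sum_congr rfl fun j _ => by rw [hQsym i j, sq]
    have hle : (Q i i) ^ 2 ≤ ∑ j, (Q i j) ^ 2 :=
      Finset.single_le_sum (fun j _ => sq_nonneg (Q i j)) (Finset.mem_univ i)
    have h2 : (s i) ^ 2 ≤ s i := by
      rw [hsQ i]
      calc (Q i i) ^ 2 ≤ ∑ j, (Q i j) ^ 2 := hle
        _ = Q i i := hq.symm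
    nlinarith [h0 i]
  have hsum : ∑ i, s i = (k : ℝ) := by
    have : ∑ i, s i = Matrix.trace Q := by
      rw [Matrix.trace]
      exact Finset.sum_congr rfl fun i _ => hsQ i
    rw [this, hQdef, Matrix.trace_mul_comm, hPtP, Matrix.trace_one]
    simp
  have hperm_sum : ∑ i, μ i * s i = ∑ i, lam i * s (σ i) := by
    rw [← Equiv.sum_comp σ (fun i => μ i * s i)]
    exact Finset.sum_congr rfl fun i _ => by rw [hσ]; rfl
  rw [htr, hperm_sum]
  exact kyfan_aux lam hdec k hk (fun i => s (σ i)) (fun i => h0 _) (fun i => h1 _)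
    (by rw [Equiv.sum_comp σ s, hsum])
end
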